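/- Let H = (V, E_0) be a cycle on n = q^{g+1} vertices (q ≥ 3, g ≥ 3), and let A be a set of q-hyperedges on V such that no vertex is incident with more than one hyperedge of A and the hypergraph (V, E_0 ∪ A) has girth at least g. If |A| < q^g, then there exists a set A⁺ of q-hyperedges with |A⁺| = |A| + 1 satisfying the same two conditions. -/

import Mathlib

/-!
Distances are measured by non-backtracking walks (`NBReach`). Since the hyperedges form a
matching, a closed non-backtracking walk is at least as long as the girth even if it backtracks
where it closes up. If some `q` uncovered vertices are pairwise at distance at least `g - 1`, they
form the new hyperedge. Otherwise a maximal such set has fewer than `q` elements, and the balls of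
radius `g - 2` around it cover all uncovered vertices. Counting non-backtracking walks (at most
`2 q ^ ℓ` of length `ℓ + 1` end with a cycle edge) shows that there are few uncovered vertices,
hence many hyperedges, so one can greedily pick `q` uncovered vertices `u i` and `q` hyperedges
`f i`, all pairwise far apart. For `v i ∈ f i`, exchanging each `u i` with `v i` turns
`A ∪ {{u i}}` into the required family. A short cycle in it would run from a new hyperedge
through old ones to the next new hyperedge, joining two vertices that are far apart unless both
are `u i`'s, and no new hyperedge contains two of those.
-/

/-- Adjacency along the Hamiltonian cycle `H` on `Fin n` (with wrap-around). -/
def HamCycAdj (n : ℕ) (a b : Fin n) : Prop :=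
  (a.val + 1) % n = b.val ∨ (b.val + 1) % n = a.val

def HyperAdj {n : ℕ} (A : Finset (Finset (Fin n))) (a b : Fin n) : Prop :=
  a ≠ b ∧ ∃ e ∈ A, a ∈ e ∧ b ∈ e

/-- A cycle of length L in the hypergraph (V, E₀ ∪ A): a closed walk `w` with
step types `t` (`true` = Hamiltonian cycle edge, `false` = hyperedge) which never
uses the same edge or hyperedge in two consecutive steps (no two consecutive
hyperedge steps, as the hyperedges form a matching; no Hamiltonian U-turns). -/
def IsCycleWalk {n : ℕ} (A : Finset (Finset (Fin n))) (L : ℕ)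
    (w : ZMod L → Fin n) (t : ZMod L → Bool) : Prop :=
  0 < L
  ∧ (∀ i : ZMod L, (t i = true → HamCycAdj n (w i) (w (i + 1)))
      ∧ (t i = false → HyperAdj A (w i) (w (i + 1))))
  ∧ (∀ i : ZMod L, ¬(t i = false ∧ t (i + 1) = false))
  ∧ (∀ i : ZMod L, ¬(t i = true ∧ t (i + 1) = true ∧ w (i + 2) = w i))

namespace HypergraphGirth

open Finset

theorem exists_pairwise_not_rel_cover {α : Type*} (U : Finset α) (R : α → α → Prop)
    (hrefl : ∀ x, R x x) (hsymm : ∀ x y, R x y → R y x) :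
    ∃ S ⊆ U, (S : Set α).Pairwise (fun x y => ¬R x y) ∧ ∀ u ∈ U, ∃ s ∈ S, R s u := by
  classical
  obtain ⟨S, hS, hmax⟩ := exists_max_image
    (U.powerset.filter fun S : Finset α => (S : Set α).Pairwise fun x y => ¬R x y) card
    ⟨∅, by simp⟩
  obtain ⟨hSU, hSP⟩ := mem_filter.1 hS
  refine ⟨S, mem_powerset.1 hSU, hSP, fun u hu => ?_⟩
  by_contra! hfar
  have huS : u ∉ S := fun h => hfar u h (hrefl u)
  have := hmax (insert u S) (mem_filter.2 ⟨mem_powerset.2 (insert_subset hu (mem_powerset.1 hSU)),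
    by
      rw [coe_insert]
      exact hSP.insert fun s hs _ => ⟨fun h => hfar s hs (hsymm _ _ h), hfar s hs⟩⟩)
  rw [card_insert_of_notMem huS] at this
  omega

theorem exists_pairwise_not_rel_card_eq {α : Type*} (A : Finset α) (R : α → α → Prop)
    (hrefl : ∀ a ∈ A, R a a) (hsymm : ∀ x y, R x y → R y x) (t : ℕ)
    (hext : ∀ S ⊆ A, #S < t → ∃ a ∈ A, ∀ b ∈ S, ¬R b a) :
    ∃ S ⊆ A, #S = t ∧ (S : Set α).Pairwise fun x y => ¬R x y := by
  classical
  induction t with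
  | zero => exact ⟨∅, empty_subset _, rfl, by simp⟩
  | succ t ih =>
    obtain ⟨S, hSA, hS, hSP⟩ := ih fun S hSA hS => hext S hSA (by omega)
    obtain ⟨a, ha, haS⟩ := hext S hSA (by omega)
    have haS' : a ∉ S := fun h => haS a h (hrefl a ha)
    refine ⟨insert a S, insert_subset ha hSA, by rw [card_insert_of_notMem haS', hS], ?_⟩
    rw [coe_insert]
    exact hSP.insert fun b hb _ => ⟨fun h => haS b hb (hsymm _ _ h), haS b hb⟩

theorem pairwiseDisjoint_map_mapEmbedding {α β : Type*} {B : Finset (Finset α)}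
    (hB : (B : Set (Finset α)).PairwiseDisjoint id) (φ : α ↪ β) :
    ((B.map (mapEmbedding φ).toEmbedding : Finset (Finset β)) : Set (Finset β)).PairwiseDisjoint
      id := by
  intro e' he' f' hf' hne
  obtain ⟨e, he, rfl⟩ := mem_map.1 he'
  obtain ⟨f, hf, rfl⟩ := mem_map.1 hf'
  simp only [Function.onFun, id, RelEmbedding.coe_toEmbedding, mapEmbedding_apply,
    disjoint_map] at hne ⊢
  exact hB he hf fun h => hne (h ▸ rfl)

theorem exists_next_index {L : ℕ} (hL : 0 < L) (P : ZMod L → Prop) {i : ZMod L} (hi : P i) :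
    ∃ m < L, P (i + (m + 1 : ℕ)) ∧ ∀ j < m, ¬P (i + (j + 1 : ℕ)) := by
  classical
  have hex : ∃ m, P (i + (m + 1 : ℕ)) :=
    ⟨L - 1, by rwa [Nat.sub_add_cancel hL, ZMod.natCast_self, add_zero]⟩
  refine ⟨Nat.find hex, ?_, Nat.find_spec hex, fun j hj => Nat.find_min hex hj⟩
  have := Nat.find_le (h := hex) (n := L - 1)
    (by rwa [Nat.sub_add_cancel hL, ZMod.natCast_self, add_zero])
  omega

variable {n : ℕ} {A B : Finset (Finset (Fin n))}

/-! ### Non-backtracking walks -/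

def IsStep (A : Finset (Finset (Fin n))) (b : Bool) (x y : Fin n) : Prop :=
  cond b (HamCycAdj n x y) (HyperAdj A x y)

def NoBacktrack (b₁ b₂ : Bool) (x z : Fin n) : Prop :=
  ¬(b₁ = false ∧ b₂ = false) ∧ ¬(b₁ = true ∧ b₂ = true ∧ z = x)

/-- A non-backtracking walk `v 0, …, v k` with step types `s 0, …, s (k - 1)`; the values of
`v` and `s` at larger indices play no role. -/
def IsNBWalk (A : Finset (Finset (Fin n))) (k : ℕ) (v : ℕ → Fin n) (s : ℕ → Bool) : Prop :=
  (∀ i < k, IsStep A (s i) (v i) (v (i + 1))) ∧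
    ∀ i, i + 2 ≤ k → NoBacktrack (s i) (s (i + 1)) (v i) (v (i + 2))

def HasGirthAtLeast (A : Finset (Finset (Fin n))) (g : ℕ) : Prop :=
  ∀ L w t, IsCycleWalk A L w t → g ≤ L

def NBReach (A : Finset (Finset (Fin n))) (d : ℕ) (x y : Fin n) : Prop :=
  ∃ k ≤ d, ∃ v s, IsNBWalk A k v s ∧ v 0 = x ∧ v k = y

def uncovered (A : Finset (Finset (Fin n))) : Finset (Fin n) :=
  univ.filter fun x => ∀ e ∈ A, x ∉ e

theorem mem_uncovered {x : Fin n} : x ∈ uncovered A ↔ ∀ e ∈ A, x ∉ e := by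
  simp [uncovered]

theorem hamCycAdj_comm {x y : Fin n} : HamCycAdj n x y ↔ HamCycAdj n y x :=
  or_comm

theorem not_hamCycAdj_self (hn : 2 ≤ n) (x : Fin n) : ¬HamCycAdj n x x := by
  have hx := x.isLt
  have : (x.val + 1) % n ≠ x.val := by
    rcases Nat.lt_or_ge (x.val + 1) n with h | h
    · rw [Nat.mod_eq_of_lt h]; omega
    · rw [show x.val + 1 = n by omega, Nat.mod_self]; omega
  simp [HamCycAdj, this]

namespace IsStep

theorem symm {b : Bool} {x y : Fin n} (h : IsStep A b x y) : IsStep A b y x := by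
  cases b
  · obtain ⟨hxy, e, he, hx, hy⟩ := h
    exact ⟨hxy.symm, e, he, hy, hx⟩
  · exact hamCycAdj_comm.1 h

theorem ne (hn : 2 ≤ n) {b : Bool} {x y : Fin n} (h : IsStep A b x y) : x ≠ y := by
  cases b
  · exact h.1
  · rintro rfl; exact not_hamCycAdj_self hn x h

theorem mono (hAB : A ⊆ B) {b : Bool} {x y : Fin n} (h : IsStep A b x y) : IsStep B b x y := by
  cases b
  · obtain ⟨hxy, e, he, hx, hy⟩ := h
    exact ⟨hxy, e, hAB he, hx, hy⟩
  · exact h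

end IsStep

theorem NoBacktrack.symm {b₁ b₂ : Bool} {x z : Fin n} (h : NoBacktrack b₁ b₂ x z) :
    NoBacktrack b₂ b₁ z x :=
  ⟨fun ⟨h₁, h₂⟩ => h.1 ⟨h₂, h₁⟩, fun ⟨h₁, h₂, h₃⟩ => h.2 ⟨h₂, h₁, h₃.symm⟩⟩

namespace IsNBWalk

variable {k : ℕ} {v : ℕ → Fin n} {s : ℕ → Bool}

theorem of_le {k' : ℕ} (hk : k' ≤ k) (h : IsNBWalk A k v s) : IsNBWalk A k' v s :=
  ⟨fun i hi => h.1 i (by omega), fun i hi => h.2 i (by omega)⟩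

theorem tail (h : IsNBWalk A (k + 1) v s) :
    IsNBWalk A k (fun i => v (i + 1)) (fun i => s (i + 1)) :=
  ⟨fun i hi => h.1 (i + 1) (by omega), fun i hi => h.2 (i + 1) (by omega)⟩

theorem reverse (h : IsNBWalk A k v s) :
    IsNBWalk A k (fun i => v (k - i)) (fun i => s (k - 1 - i)) := by
  refine ⟨fun i hi => ?_, fun i hi => ?_⟩
  · show IsStep A (s (k - 1 - i)) (v (k - i)) (v (k - (i + 1)))
    rw [show k - i = k - 1 - i + 1 by omega, show k - (i + 1) = k - 1 - i by omega]
    exact (h.1 _ (by omega)).symm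
  · show NoBacktrack (s (k - 1 - i)) (s (k - 1 - (i + 1))) (v (k - i)) (v (k - (i + 2)))
    rw [show k - 1 - i = k - 2 - i + 1 by omega, show k - i = k - 2 - i + 2 by omega,
      show k - 1 - (i + 1) = k - 2 - i by omega, show k - (i + 2) = k - 2 - i by omega]
    exact (h.2 _ (by omega)).symm

theorem snoc (h : IsNBWalk A k v s) {b : Bool} {y : Fin n} (hstep : IsStep A b (v k) y)
    (hnb : 0 < k → NoBacktrack (s (k - 1)) b (v (k - 1)) y) :
    IsNBWalk A (k + 1) (Function.update v (k + 1) y) (Function.update s k b) := by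
  refine ⟨fun i hi => ?_, fun i hi => ?_⟩
  · rcases Nat.lt_or_ge i k with hik | hik
    · rw [Function.update_of_ne (by omega : i + 1 ≠ k + 1),
        Function.update_of_ne (by omega : i ≠ k + 1), Function.update_of_ne (by omega : i ≠ k)]
      exact h.1 i hik
    · obtain rfl : i = k := by omega
      rw [Function.update_self, Function.update_self, Function.update_of_ne (by omega : i ≠ i + 1)]
      exact hstep
  · rcases Nat.lt_or_ge (i + 2) (k + 1) with hik | hik
    · rw [Function.update_of_ne (by omega : i + 2 ≠ k + 1),
        Function.update_of_ne (by omega : i ≠ k + 1), Function.update_of_ne (by omega : i + 1 ≠ k),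
        Function.update_of_ne (by omega : i ≠ k)]
      exact h.2 i (by omega)
    · obtain rfl : i = k - 1 := by omega
      rw [show k - 1 + 1 = k by omega, show k - 1 + 2 = k + 1 by omega, Function.update_self,
        Function.update_self, Function.update_of_ne (by omega : k - 1 ≠ k + 1),
        Function.update_of_ne (by omega : k - 1 ≠ k)]
      exact hnb (by omega)

end IsNBWalk

theorem NBReach.refl (d : ℕ) (x : Fin n) : NBReach A d x x :=
  ⟨0, Nat.zero_le d, fun _ => x, fun _ => true, ⟨by simp, by simp⟩, rfl, rfl⟩

theorem NBReach.symm {d : ℕ} {x y : Fin n} (h : NBReach A d x y) : NBReach A d y x := by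
  obtain ⟨k, hk, v, s, hw, rfl, rfl⟩ := h
  exact ⟨k, hk, _, _, hw.reverse, by simp, by simp⟩

theorem isCycleWalk_iff {L : ℕ} {w : ZMod L → Fin n} {t : ZMod L → Bool} :
    IsCycleWalk A L w t ↔ 0 < L ∧
      ∀ i, IsStep A (t i) (w i) (w (i + 1)) ∧ NoBacktrack (t i) (t (i + 1)) (w i) (w (i + 2)) := by
  have step_iff : ∀ i, IsStep A (t i) (w i) (w (i + 1)) ↔
      (t i = true → HamCycAdj n (w i) (w (i + 1))) ∧ (t i = false → HyperAdj A (w i) (w (i + 1))) :=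
    fun i => by cases t i <;> simp [IsStep]
  simp only [IsCycleWalk, NoBacktrack, step_iff]
  exact and_congr_right fun _ =>
    ⟨fun ⟨h₁, h₂, h₃⟩ i => ⟨h₁ i, h₂ i, h₃ i⟩,
      fun h => ⟨fun i => (h i).1, fun i => (h i).2.1, fun i => (h i).2.2⟩⟩

theorem _root_.IsCycleWalk.isNBWalk_shift {L : ℕ} {w : ZMod L → Fin n} {t : ZMod L → Bool}
    (h : IsCycleWalk A L w t) (i₀ : ZMod L) (k : ℕ) :
    IsNBWalk A k (fun j => w (i₀ + j)) (fun j => t (i₀ + j)) := by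
  have h := (isCycleWalk_iff.1 h).2
  have hcast : ∀ j m : ℕ, i₀ + ((j + m : ℕ) : ZMod L) = i₀ + j + m := fun j m => by
    push_cast; ring
  refine ⟨fun j _ => ?_, fun j _ => ?_⟩
  · simpa only [hcast, Nat.cast_one] using (h (i₀ + j)).1
  · simpa only [hcast, Nat.cast_one, Nat.cast_ofNat] using (h (i₀ + j)).2

theorem IsNBWalk.isCycleWalk {k : ℕ} {v : ℕ → Fin n} {s : ℕ → Bool} (h : IsNBWalk A k v s)
    (hk : 2 ≤ k) (hcl : v k = v 0) (hwrap : NoBacktrack (s (k - 1)) (s 0) (v (k - 1)) (v 1)) :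
    IsCycleWalk A k (fun i => v i.val) (fun i => s i.val) := by
  have : NeZero k := ⟨by omega⟩
  have hval : ∀ (i : ZMod k) (m : ℕ), (i + m).val = (i.val + m) % k := fun i m => by
    rw [ZMod.val_add, ZMod.val_natCast, Nat.add_mod_mod]
  have hv : ∀ m ≤ k, v (m % k) = v m := fun m hm => by
    rcases hm.lt_or_eq with hm | rfl
    · rw [Nat.mod_eq_of_lt hm]
    · rw [Nat.mod_self, hcl]
  refine isCycleWalk_iff.2 ⟨by omega, fun i => ?_⟩
  have hi := ZMod.val_lt i
  have h1 := hval i 1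
  have h2 := hval i 2
  rw [Nat.cast_one] at h1
  rw [Nat.cast_ofNat] at h2
  simp only [h1, h2]
  refine ⟨by rw [hv _ (by omega)]; exact h.1 _ hi, ?_⟩
  rcases Nat.lt_or_ge (i.val + 1) k with hi1 | hi1
  · rw [Nat.mod_eq_of_lt hi1, hv _ (by omega)]
    exact h.2 _ (by omega)
  · obtain hik : i.val = k - 1 := by omega
    rw [hik, show k - 1 + 1 = k by omega, show k - 1 + 2 = k + 1 by omega, Nat.mod_self,
      Nat.add_mod_left, Nat.mod_eq_of_lt (by omega : 1 < k)]
    exact hwrap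

theorem HasGirthAtLeast.anti {g : ℕ} (hB : HasGirthAtLeast B g) (hAB : A ⊆ B) :
    HasGirthAtLeast A g := by
  intro L w t hw
  obtain ⟨hL, h⟩ := isCycleWalk_iff.1 hw
  exact hB L w t (isCycleWalk_iff.2 ⟨hL, fun i => ⟨(h i).1.mono hAB, (h i).2⟩⟩)

/-- The wrap-around of the closed walk may backtrack; then deleting its two end steps, or merging
them into one hyperedge step, gives a shorter closed walk. -/
theorem HasGirthAtLeast.le_of_isNBWalk (hn : 2 ≤ n)
    (hmatch : (A : Set (Finset (Fin n))).PairwiseDisjoint id) {g : ℕ} (hA : HasGirthAtLeast A g) :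
    ∀ {k : ℕ} {v : ℕ → Fin n} {s : ℕ → Bool}, IsNBWalk A k v s → 0 < k → v k = v 0 → g ≤ k := by
  intro k
  induction k using Nat.strong_induction_on with
  | _ k ih =>
  intro v s hw hk hcl
  rcases (show k = 1 ∨ k = 2 ∨ 3 ≤ k by omega) with rfl | rfl | hk3
  · exact absurd hcl.symm ((hw.1 0 one_pos).ne hn)
  · have h := hw.2 0 le_rfl
    rw [hcl] at h
    exact hA _ _ _ (hw.isCycleWalk le_rfl hcl
      ⟨fun h' => h.1 ⟨h'.2, h'.1⟩, fun h' => h.2 ⟨h'.2.1, h'.1, rfl⟩⟩)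
  obtain ⟨m, rfl⟩ : ∃ m, k = m + 3 := ⟨k - 3, by omega⟩
  by_cases hwrap : NoBacktrack (s (m + 2)) (s 0) (v (m + 2)) (v 1)
  · exact hA _ _ _ (hw.isCycleWalk (by omega) hcl hwrap)
  have hinner : IsNBWalk A (m + 1) (fun i => v (i + 1)) (fun i => s (i + 1)) :=
    (hw.of_le (by omega)).tail
  by_cases hturn : v 1 = v (m + 2)
  · have := ih (m + 1) (by omega) hinner (by omega) hturn.symm
    omega
  have hFF : s (m + 2) = false ∧ s 0 = false := by
    by_contra hFF
    exact hwrap ⟨hFF, fun h => hturn h.2.2⟩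
  have hlast : IsStep A (s (m + 2)) (v (m + 2)) (v (m + 3)) := hw.1 (m + 2) (by omega)
  have hfirst : IsStep A (s 0) (v 0) (v 1) := hw.1 0 (by omega)
  rw [hFF.1, hcl] at hlast
  rw [hFF.2] at hfirst
  obtain ⟨-, e, he, hxe, h0e⟩ := hlast
  obtain ⟨-, e', he', h0e', h1e'⟩ := hfirst
  obtain rfl : e = e' := hmatch.elim_finset he he' _ h0e h0e'
  have hprev : s (m + 1) ≠ false := fun h => (hw.2 (m + 1) (by omega)).1 ⟨h, hFF.1⟩
  have hmerged := hinner.snoc (b := false) (y := v 1) ⟨Ne.symm hturn, e, he, hxe, h1e'⟩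
    (fun _ => ⟨fun h => hprev h.1, fun h => Bool.false_ne_true h.2.1⟩)
  have := ih (m + 2) (by omega) hmerged (by omega) (by simp)
  omega

/-! ### Replacing hyperedges -/

section Modification

variable {F New : Finset (Finset (Fin n))} {soft : Finset (Fin n)} {g : ℕ}

def IsNewStep (New : Finset (Finset (Fin n))) {L : ℕ} (w : ZMod L → Fin n) (t : ZMod L → Bool)
    (i : ZMod L) : Prop :=
  t i = false ∧ ∃ E ∈ New, w i ∈ E ∧ w (i + 1) ∈ E

theorem isStep_of_not_isNewStep {L : ℕ} {w : ZMod L → Fin n} {t : ZMod L → Bool}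
    (hW : IsCycleWalk ((A \ F) ∪ New) L w t) {i : ZMod L} (hi : ¬IsNewStep New w t i) :
    IsStep A (t i) (w i) (w (i + 1)) := by
  have h := ((isCycleWalk_iff.1 hW).2 i).1
  cases hti : t i
  · rw [hti] at h
    obtain ⟨hne, E, hE, h₀, h₁⟩ := h
    rcases mem_union.1 hE with hE | hE
    · exact ⟨hne, E, (mem_sdiff.1 hE).1, h₀, h₁⟩
    · exact absurd ⟨hti, E, hE, h₀, h₁⟩ hi
  · rwa [hti] at h

variable (hn : 2 ≤ n) (hmatch : (A : Set (Finset (Fin n))).PairwiseDisjoint id)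
  (hA : HasGirthAtLeast A g) (hFA : F ⊆ A)
  (hfar : ∀ x y, (∃ E ∈ New, x ∈ E) → (∃ E ∈ New, y ∈ E) → x ≠ y → ¬(x ∈ soft ∧ y ∈ soft) →
    ¬NBReach A (g - 2) x y ∨ ∃ f ∈ F, x ∈ f ∧ y ∈ f)
include hn hmatch hA hFA hfar

theorem soft_of_isNBWalk {k : ℕ} {v : ℕ → Fin n} {s : ℕ → Bool} (hw : IsNBWalk A (k + 1) v s)
    (hlast : s k = true)
    (hkg : k + 3 ≤ g) (h₀ : ∃ E ∈ New, v 0 ∈ E) (h₁ : ∃ E ∈ New, v (k + 1) ∈ E) :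
    v 0 ∈ soft ∧ v (k + 1) ∈ soft := by
  by_contra hsoft
  have hne : v 0 ≠ v (k + 1) := fun h => by
    have := hA.le_of_isNBWalk hn hmatch hw (by omega) h.symm
    omega
  rcases hfar _ _ h₀ h₁ hne hsoft with hfar | ⟨f, hf, h₀f, h₁f⟩
  · exact hfar ⟨k + 1, by omega, v, s, hw, rfl, rfl⟩
  · have hclosed := hw.snoc (b := false) (y := v 0) ⟨hne.symm, f, hFA hf, h₁f, h₀f⟩
      (fun _ => ⟨fun h => by simp [hlast] at h, fun h => by simp at h⟩)
    have := hA.le_of_isNBWalk hn hmatch hclosed (by omega) (by simp)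
    omega

/-- The stretch of a short cycle from a new hyperedge to the next one is a walk in `A`, so by
`soft_of_isNBWalk` it joins two soft vertices. -/
theorem soft_of_isNewStep {L : ℕ} {w : ZMod L → Fin n} {t : ZMod L → Bool}
    (hW : IsCycleWalk ((A \ F) ∪ New) L w t)
    (hL : L < g) {i : ZMod L} (hi : IsNewStep New w t i) :
    w (i + 1) ∈ soft ∧ ∃ j, IsNewStep New w t j ∧ w j ∈ soft := by
  obtain ⟨hL0, hWs⟩ := isCycleWalk_iff.1 hW
  have hcast : ∀ j : ℕ, i + 1 + (j : ZMod L) = i + ((j + 1 : ℕ) : ZMod L) := fun j => by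
    push_cast; ring
  obtain ⟨m, hmL, hm, hmin⟩ := exists_next_index hL0 (IsNewStep New w t) hi
  obtain ⟨k, rfl⟩ : ∃ k, m = k + 1 := by
    refine Nat.exists_eq_add_one.2 (Nat.pos_of_ne_zero fun hm0 => ?_)
    subst hm0
    exact (hWs i).2.1 ⟨hi.1, by simpa using hm.1⟩
  have hseg : IsNBWalk A (k + 1) (fun j => w (i + 1 + j)) (fun j => t (i + 1 + j)) :=
    ⟨fun j hj => by
      have := isStep_of_not_isNewStep hW (i := i + 1 + j) (by rw [hcast]; exact hmin j hj)
      simpa only [Nat.cast_succ, ← add_assoc] using this, (hW.isNBWalk_shift (i + 1) (k + 1)).2⟩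
  have hlast : t (i + 1 + (k : ℕ)) = true := by
    have h := (hWs (i + 1 + (k : ℕ))).2.1
    rw [show i + 1 + (k : ZMod L) + 1 = i + ((k + 1 + 1 : ℕ) : ZMod L) by push_cast; ring] at h
    cases htk : t (i + 1 + (k : ℕ))
    · exact absurd ⟨htk, hm.1⟩ h
    · rfl
  have hsoft := soft_of_isNBWalk hn hmatch hA hFA hfar hseg hlast (by omega)
    (by obtain ⟨-, E, hE, -, h⟩ := hi; exact ⟨E, hE, by simpa using h⟩)
    (by obtain ⟨-, E, hE, h, -⟩ := hm; exact ⟨E, hE, by rwa [hcast]⟩)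
  simp only [Nat.cast_zero, add_zero, hcast] at hsoft
  exact ⟨hsoft.1, _, hm, hsoft.2⟩

/-- `hfar` asks vertices of new hyperedges to be far apart in `A` unless they lie in a common
removed hyperedge or are both `soft`. A cycle shorter than `g` must use a new hyperedge, and by
`soft_of_isNewStep` the next new hyperedge it uses contains two soft vertices, which `hone`
forbids. -/
theorem HasGirthAtLeast.sdiff_union
    (hone : ∀ E ∈ New, ∀ x ∈ E, ∀ y ∈ E, x ∈ soft → y ∈ soft → x = y) :
    HasGirthAtLeast ((A \ F) ∪ New) g := by
  intro L w t hW
  by_contra! hL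
  obtain ⟨hL0, hWs⟩ := isCycleWalk_iff.1 hW
  have hnew : ∃ i, IsNewStep New w t i := by
    by_contra! h
    exact hL.not_ge (hA L w t (isCycleWalk_iff.2
      ⟨hL0, fun i => ⟨isStep_of_not_isNewStep hW (h i), (hWs i).2⟩⟩))
  obtain ⟨i, hi⟩ := hnew
  obtain ⟨-, j, hj, hjsoft⟩ := soft_of_isNewStep hn hmatch hA hFA hfar hW hL hi
  obtain ⟨htj, E, hE, hjE, hj₁E⟩ := hj
  have hne : w j ≠ w (j + 1) := by
    have h := (hWs j).1
    rw [htj] at h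
    exact h.1
  exact hne (hone E hE _ hjE _ hj₁E hjsoft (soft_of_isNewStep hn hmatch hA hFA hfar hW hL
    ⟨htj, E, hE, hjE, hj₁E⟩).1)

end Modification

/-! ### Counting non-backtracking walks -/

section Counting

open scoped Classical

def lastVertex (x : Fin n) : List (Fin n × Bool) → Fin n
  | [] => x
  | p :: _ => p.1

def CanExtend (A : Finset (Finset (Fin n))) (x : Fin n) (l : List (Fin n × Bool))
    (p : Fin n × Bool) : Prop :=
  IsStep A p.2 (lastVertex x l) p.1 ∧
    ∀ p' rest, l = p' :: rest → NoBacktrack p'.2 p.2 (lastVertex x rest) p.1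

/-- The non-backtracking walks of length `ℓ` from `x`, each stored as its list of steps
`(vertex reached, step type)`, most recent step first. -/
noncomputable def walks (A : Finset (Finset (Fin n))) (x : Fin n) :
    ℕ → Finset (List (Fin n × Bool))
  | 0 => {[]}
  | ℓ + 1 => (walks A x ℓ).biUnion fun l => (univ.filter (CanExtend A x l)).image (· :: l)

def EndsWith (b : Bool) : List (Fin n × Bool) → Prop
  | [] => False
  | p :: _ => p.2 = b

noncomputable def walksEndingWith (A : Finset (Finset (Fin n))) (x : Fin n) (ℓ : ℕ) (b : Bool) :
    Finset (List (Fin n × Bool)) :=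
  (walks A x ℓ).filter (EndsWith b)

noncomputable def extensions (A : Finset (Finset (Fin n))) (x : Fin n) (l : List (Fin n × Bool))
    (b : Bool) : Finset (Fin n) :=
  univ.filter fun y => CanExtend A x l (y, b)

variable {x : Fin n} {ℓ : ℕ}

theorem cons_mem_walks_succ {p : Fin n × Bool} {l : List (Fin n × Bool)} :
    p :: l ∈ walks A x (ℓ + 1) ↔ l ∈ walks A x ℓ ∧ CanExtend A x l p := by
  simp only [walks, mem_biUnion, mem_image, mem_filter, mem_univ, true_and, List.cons.injEq]
  constructor
  · rintro ⟨l', hl', p', hp', rfl, rfl⟩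
    exact ⟨hl', hp'⟩
  · rintro ⟨hl, hp⟩
    exact ⟨l, hl, p, hp, rfl, rfl⟩

theorem nil_notMem_walks_succ : [] ∉ walks A x (ℓ + 1) := by
  simp [walks]

theorem walksEndingWith_zero (b : Bool) : walksEndingWith A x 0 b = ∅ := by
  simp [walksEndingWith, walks, EndsWith]

theorem card_walksEndingWith_succ_le (b : Bool) :
    #(walksEndingWith A x (ℓ + 1) b) ≤ ∑ l ∈ walks A x ℓ, #(extensions A x l b) := by
  calc #(walksEndingWith A x (ℓ + 1) b)
      ≤ #((walks A x ℓ).biUnion fun l => (extensions A x l b).image fun y => (y, b) :: l) := by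
        refine card_le_card fun l' hl' => ?_
        obtain ⟨hl', hb⟩ := mem_filter.1 hl'
        match l', hl', hb with
        | (y, b') :: l, hl', hb =>
          obtain rfl : b' = b := hb
          obtain ⟨hl, hext⟩ := cons_mem_walks_succ.1 hl'
          exact mem_biUnion.2 ⟨l, hl, mem_image.2 ⟨y, by simpa [extensions] using hext, rfl⟩⟩
    _ ≤ ∑ l ∈ walks A x ℓ, #((extensions A x l b).image fun y => (y, b) :: l) := card_biUnion_le
    _ ≤ ∑ l ∈ walks A x ℓ, #(extensions A x l b) := sum_le_sum fun _ _ => card_image_le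

theorem sum_walks_succ (f : List (Fin n × Bool) → ℕ) :
    ∑ l ∈ walks A x (ℓ + 1), f l =
      ∑ l ∈ walksEndingWith A x (ℓ + 1) true, f l +
        ∑ l ∈ walksEndingWith A x (ℓ + 1) false, f l := by
  rw [← sum_filter_add_sum_filter_not _ (EndsWith true)]
  congr 1
  refine sum_congr (filter_congr fun l hl => ?_) fun _ _ => rfl
  match l, hl with
  | [], hl => exact absurd hl nil_notMem_walks_succ
  | (y, b) :: l, _ => cases b <;> simp [EndsWith]

theorem card_walks_succ :
    #(walks A x (ℓ + 1)) =
      #(walksEndingWith A x (ℓ + 1) true) + #(walksEndingWith A x (ℓ + 1) false) := by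
  simpa using sum_walks_succ (A := A) (x := x) (ℓ := ℓ) fun _ => 1

theorem card_filter_hamCycAdj_le (z : Fin n) : #(univ.filter (HamCycAdj n z)) ≤ 2 := by
  have hsucc : ∀ a < n, (a + 1) % n = a + 1 ∨ a + 1 = n ∧ (a + 1) % n = 0 := fun a ha => by
    rcases Nat.lt_or_ge (a + 1) n with h | h
    · exact Or.inl (Nat.mod_eq_of_lt h)
    · exact Or.inr ⟨by omega, by rw [show a + 1 = n by omega, Nat.mod_self]⟩
  calc #(univ.filter (HamCycAdj n z))
      ≤ #(univ.filter (fun y : Fin n => (z.val + 1) % n = y.val) ∪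
          univ.filter (fun y : Fin n => (y.val + 1) % n = z.val)) := card_le_card fun y hy => by
        simp only [mem_union, mem_filter, mem_univ, true_and]
        exact (mem_filter.1 hy).2
    _ ≤ 1 + 1 := by
        refine (card_union_le _ _).trans (add_le_add (card_le_one.2 ?_) (card_le_one.2 ?_))
        · simp only [mem_filter, mem_univ, true_and]
          exact fun a ha b hb => Fin.ext (ha.symm.trans hb)
        · simp only [mem_filter, mem_univ, true_and]
          intro a ha b hb
          apply Fin.ext
          rcases hsucc a a.isLt with h | h <;> rcases hsucc b b.isLt with h' | h' <;> omega

variable {l : List (Fin n × Bool)}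

theorem card_extensions_true_le : #(extensions A x l true) ≤ 2 :=
  (card_le_card fun y hy => by simpa [IsStep] using (mem_filter.1 hy).2.1)
    |>.trans (card_filter_hamCycAdj_le _)

theorem card_extensions_true_le_one (hl : l ∈ walks A x ℓ) (hend : EndsWith true l) :
    #(extensions A x l true) ≤ 1 := by
  match ℓ, l, hl, hend with
  | 0, _, hl, hend => simp_all [walks, EndsWith]
  | ℓ + 1, (z, b) :: rest, hl, hend =>
    obtain rfl : b = true := hend
    have hprev : HamCycAdj n z (lastVertex x rest) :=
      hamCycAdj_comm.1 (cons_mem_walks_succ.1 hl).2.1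
    have hsub : extensions A x ((z, true) :: rest) true ⊆
        (univ.filter (HamCycAdj n z)).erase (lastVertex x rest) := fun y hy => by
      obtain ⟨hstep, hnb⟩ := (mem_filter.1 hy).2
      exact mem_erase.2 ⟨fun h => (hnb _ _ rfl).2 ⟨rfl, rfl, h⟩,
        by simpa [IsStep, lastVertex] using hstep⟩
    have := card_filter_hamCycAdj_le z
    have := card_erase_of_mem (s := univ.filter (HamCycAdj n z)) (by simpa using hprev)
    have := card_le_card hsub
    omega

theorem extensions_false_eq_empty_of_endsWith (hend : EndsWith false l) :
    extensions A x l false = ∅ := by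
  match l, hend with
  | (z, b) :: rest, hend =>
    obtain rfl : b = false := hend
    exact eq_empty_of_forall_notMem fun y hy => ((mem_filter.1 hy).2.2 _ _ rfl).1 ⟨rfl, rfl⟩

theorem extensions_false_eq_empty_of_uncovered (hz : lastVertex x l ∈ uncovered A) :
    extensions A x l false = ∅ :=
  eq_empty_of_forall_notMem fun y hy => by
    obtain ⟨-, e, he, hze, -⟩ := (mem_filter.1 hy).2.1
    exact mem_uncovered.1 hz e he hze

theorem card_extensions_false_le {q : ℕ} (hcard : ∀ e ∈ A, e.card = q)
    (hmatch : (A : Set (Finset (Fin n))).PairwiseDisjoint id) :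
    #(extensions A x l false) ≤ q - 1 := by
  by_cases hz : ∃ e ∈ A, lastVertex x l ∈ e
  · obtain ⟨e, he, hze⟩ := hz
    calc #(extensions A x l false) ≤ #(e.erase (lastVertex x l)) := card_le_card fun y hy => by
          obtain ⟨hne, e', he', hze', hye'⟩ := (mem_filter.1 hy).2.1
          obtain rfl := hmatch.elim_finset he' he _ hze' hze
          exact mem_erase.2 ⟨hne.symm, hye'⟩
      _ = q - 1 := by rw [card_erase_of_mem hze, hcard e he]
  · rw [extensions_false_eq_empty_of_uncovered (mem_uncovered.2 fun e he h => hz ⟨e, he, h⟩),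
      card_empty]
    exact Nat.zero_le _

theorem card_walksEndingWith_true_succ_succ :
    #(walksEndingWith A x (ℓ + 2) true) ≤
      #(walksEndingWith A x (ℓ + 1) true) + 2 * #(walksEndingWith A x (ℓ + 1) false) := by
  calc #(walksEndingWith A x (ℓ + 2) true)
      ≤ ∑ l ∈ walks A x (ℓ + 1), #(extensions A x l true) := card_walksEndingWith_succ_le true
    _ = ∑ l ∈ walksEndingWith A x (ℓ + 1) true, #(extensions A x l true) +
          ∑ l ∈ walksEndingWith A x (ℓ + 1) false, #(extensions A x l true) := sum_walks_succ _
    _ ≤ #(walksEndingWith A x (ℓ + 1) true) * 1 + #(walksEndingWith A x (ℓ + 1) false) * 2 := by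
        gcongr
        · exact (sum_le_card_nsmul _ _ 1 fun l hl =>
            card_extensions_true_le_one (mem_filter.1 hl).1 (mem_filter.1 hl).2).trans_eq
              (smul_eq_mul _ _)
        · exact (sum_le_card_nsmul _ _ 2 fun l _ => card_extensions_true_le).trans_eq
            (smul_eq_mul _ _)
    _ = _ := by ring

theorem card_walksEndingWith_false_succ_succ {q : ℕ} (hcard : ∀ e ∈ A, e.card = q)
    (hmatch : (A : Set (Finset (Fin n))).PairwiseDisjoint id) :
    #(walksEndingWith A x (ℓ + 2) false) ≤ (q - 1) * #(walksEndingWith A x (ℓ + 1) true) := by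
  calc #(walksEndingWith A x (ℓ + 2) false)
      ≤ ∑ l ∈ walks A x (ℓ + 1), #(extensions A x l false) := card_walksEndingWith_succ_le false
    _ = ∑ l ∈ walksEndingWith A x (ℓ + 1) true, #(extensions A x l false) +
          ∑ l ∈ walksEndingWith A x (ℓ + 1) false, #(extensions A x l false) := sum_walks_succ _
    _ ≤ #(walksEndingWith A x (ℓ + 1) true) * (q - 1) + 0 := by
        gcongr
        · exact (sum_le_card_nsmul _ _ (q - 1) fun l _ =>
            card_extensions_false_le hcard hmatch).trans_eq (smul_eq_mul _ _)
        · exact (sum_eq_zero fun l hl => by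
            rw [extensions_false_eq_empty_of_endsWith (mem_filter.1 hl).2, card_empty]).le
    _ = _ := by ring

theorem card_walksEndingWith_one_le (b : Bool) :
    #(walksEndingWith A x 1 b) ≤ #(extensions A x [] b) := by
  simpa [walks] using card_walksEndingWith_succ_le (A := A) (x := x) (ℓ := 0) b

theorem card_walksEndingWith_one_true_le : #(walksEndingWith A x 1 true) ≤ 2 :=
  (card_walksEndingWith_one_le true).trans card_extensions_true_le

theorem card_walksEndingWith_one_false_of_uncovered (hx : x ∈ uncovered A) :
    #(walksEndingWith A x 1 false) = 0 :=
  Nat.le_zero.1 <| (card_walksEndingWith_one_le false).trans_eq <| by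
    rw [extensions_false_eq_empty_of_uncovered (l := []) hx, card_empty]

/-- Walk counts grow by a factor `q` per step, once the counts of walks ending with a
Hamiltonian step and with a hyperedge step are in the ratio `2 : q - 1`. -/
theorem card_walksEndingWith_le_pow {q : ℕ} (hq : 2 ≤ q) (hcard : ∀ e ∈ A, e.card = q)
    (hmatch : (A : Set (Finset (Fin n))).PairwiseDisjoint id) {c : ℕ}
    (h : #(walksEndingWith A x (ℓ + 1) true) ≤ 2 * c ∧
      #(walksEndingWith A x (ℓ + 1) false) ≤ (q - 1) * c) :
    ∀ m, #(walksEndingWith A x (ℓ + 1 + m) true) ≤ 2 * c * q ^ m ∧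
      #(walksEndingWith A x (ℓ + 1 + m) false) ≤ (q - 1) * c * q ^ m := by
  obtain ⟨r, rfl⟩ : ∃ r, q = r + 1 := ⟨q - 1, by omega⟩
  simp only [Nat.add_sub_cancel] at h ⊢
  intro m
  induction m with
  | zero => simpa using h
  | succ m ih =>
    have hH := card_walksEndingWith_true_succ_succ (A := A) (x := x) (ℓ := ℓ + m)
    have hF := card_walksEndingWith_false_succ_succ (x := x) (ℓ := ℓ + m) hcard hmatch
    simp only [Nat.add_sub_cancel, show ℓ + m + 1 = ℓ + 1 + m by ring,
      show ℓ + m + 2 = ℓ + 1 + (m + 1) by ring] at hH hF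
    constructor
    · calc _ ≤ _ := hH
        _ ≤ 2 * c * (r + 1) ^ m + 2 * (r * c * (r + 1) ^ m) := by gcongr; exacts [ih.1, ih.2]
        _ = 2 * c * (r + 1) ^ (m + 1) := by ring
    · calc _ ≤ _ := hF
        _ ≤ r * (2 * c * (r + 1) ^ m) := by gcongr; exact ih.1
        _ ≤ r * c * (r + 1) ^ (m + 1) := by
          rw [pow_succ]
          have : 2 * (r * (c * (r + 1) ^ m)) ≤ (r + 1) * (r * (c * (r + 1) ^ m)) := by gcongr
          nlinarith

section Bounds

variable {q : ℕ} (hcard : ∀ e ∈ A, e.card = q)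
  (hmatch : (A : Set (Finset (Fin n))).PairwiseDisjoint id)
include hcard hmatch

theorem card_walksEndingWith_true_le (hq : 2 ≤ q) (m : ℕ) :
    #(walksEndingWith A x (m + 1) true) ≤ 2 * q ^ m := by
  have h := card_walksEndingWith_le_pow (ℓ := 0) (c := 1) (x := x) hq hcard hmatch
    ⟨card_walksEndingWith_one_true_le,
      (card_walksEndingWith_one_le false).trans
        (by simpa using card_extensions_false_le hcard hmatch)⟩ m
  simpa [add_comm] using h.1

theorem card_walksEndingWith_le_of_uncovered (hq : 3 ≤ q) (hx : x ∈ uncovered A) (m : ℕ) :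
    #(walksEndingWith A x (m + 2) true) ≤ 2 * (q - 1) * q ^ m ∧
      #(walksEndingWith A x (m + 2) false) ≤ (q - 1) * (q - 1) * q ^ m := by
  have hH₁ : #(walksEndingWith A x 1 true) ≤ 2 := card_walksEndingWith_one_true_le
  have hF₁ := card_walksEndingWith_one_false_of_uncovered hx
  have hH₂ : #(walksEndingWith A x 2 true) ≤
      #(walksEndingWith A x 1 true) + 2 * #(walksEndingWith A x 1 false) :=
    card_walksEndingWith_true_succ_succ (ℓ := 0)
  have hF₂ : #(walksEndingWith A x 2 false) ≤ (q - 1) * #(walksEndingWith A x 1 true) :=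
    card_walksEndingWith_false_succ_succ (ℓ := 0) hcard hmatch
  have hH₂' : #(walksEndingWith A x 2 true) ≤ 2 * (q - 1) := by omega
  have hF₂' : #(walksEndingWith A x 2 false) ≤ (q - 1) * (q - 1) :=
    hF₂.trans (Nat.mul_le_mul_left _ (by omega))
  have h := card_walksEndingWith_le_pow (ℓ := 1) (x := x) (by omega) hcard hmatch ⟨hH₂', hF₂'⟩ m
  simpa [add_comm, mul_assoc] using h

theorem sum_card_walksEndingWith_true_le (hq : 2 ≤ q) (d : ℕ) :
    (q - 1) * ∑ ℓ ∈ range (d + 1), #(walksEndingWith A x ℓ true) + 2 ≤ 2 * q ^ d := by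
  induction d with
  | zero => simp [walksEndingWith_zero]
  | succ d ih =>
    have h := card_walksEndingWith_true_le hcard hmatch (x := x) hq d
    obtain ⟨r, rfl⟩ : ∃ r, q = r + 1 := ⟨q - 1, by omega⟩
    simp only [Nat.add_sub_cancel] at ih h ⊢
    rw [sum_range_succ, mul_add, pow_succ]
    nlinarith

theorem sum_card_walksEndingWith_true_le_of_uncovered (hq : 3 ≤ q) (hx : x ∈ uncovered A)
    (k : ℕ) : ∑ ℓ ∈ range (k + 2), #(walksEndingWith A x ℓ true) ≤ 2 * q ^ k := by
  induction k with
  | zero =>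
    simpa [sum_range_succ, walksEndingWith_zero] using
      card_walksEndingWith_one_true_le (A := A) (x := x)
  | succ k ih =>
    have h := (card_walksEndingWith_le_of_uncovered hcard hmatch hq hx k).1
    obtain ⟨r, rfl⟩ : ∃ r, q = r + 1 := ⟨q - 1, by omega⟩
    simp only [Nat.add_sub_cancel] at h
    rw [sum_range_succ, pow_succ]
    nlinarith

theorem sum_card_walks_le_of_uncovered (hq : 3 ≤ q) (hx : x ∈ uncovered A) (k : ℕ) :
    ∑ ℓ ∈ range (k + 2), #(walks A x ℓ) ≤ (q + 1) * q ^ k := by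
  induction k with
  | zero =>
    have hH : #(walksEndingWith A x 1 true) ≤ 2 := card_walksEndingWith_one_true_le
    have hF := card_walksEndingWith_one_false_of_uncovered hx
    simp only [sum_range_succ, range_zero, sum_empty, zero_add, card_walks_succ, pow_zero,
      mul_one]
    simp only [walks, card_singleton]
    omega
  | succ k ih =>
    have h := card_walksEndingWith_le_of_uncovered hcard hmatch hq hx k
    obtain ⟨r, rfl⟩ : ∃ r, q = r + 1 := ⟨q - 1, by omega⟩
    simp only [Nat.add_sub_cancel] at h
    rw [sum_range_succ, card_walks_succ, pow_succ]
    nlinarith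

end Bounds

def stepList (v : ℕ → Fin n) (s : ℕ → Bool) : ℕ → List (Fin n × Bool)
  | 0 => []
  | k + 1 => (v (k + 1), s k) :: stepList v s k

theorem lastVertex_stepList (v : ℕ → Fin n) (s : ℕ → Bool) (k : ℕ) :
    lastVertex (v 0) (stepList v s k) = v k := by
  cases k <;> rfl

theorem IsNBWalk.stepList_mem_walks {v : ℕ → Fin n} {s : ℕ → Bool} :
    ∀ {k : ℕ}, IsNBWalk A k v s → stepList v s k ∈ walks A (v 0) k
  | 0, _ => mem_singleton_self _
  | k + 1, h => by
    refine cons_mem_walks_succ.2 ⟨(h.of_le k.le_succ).stepList_mem_walks,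
      by rw [lastVertex_stepList]; exact h.1 k k.lt_succ_self, fun p rest hl => ?_⟩
    cases k with
    | zero => simp [stepList] at hl
    | succ k =>
      obtain ⟨rfl, rfl⟩ := List.cons.inj hl
      rw [lastVertex_stepList]
      exact h.2 k le_rfl

theorem NBReach.exists_mem_walks {d : ℕ} {y : Fin n} (h : NBReach A d x y) :
    ∃ ℓ ≤ d, ∃ l ∈ walks A x ℓ, lastVertex x l = y := by
  obtain ⟨k, hk, v, s, hw, rfl, rfl⟩ := h
  exact ⟨k, hk, _, hw.stepList_mem_walks, lastVertex_stepList v s k⟩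

noncomputable def ball (A : Finset (Finset (Fin n))) (d : ℕ) (x : Fin n) : Finset (Fin n) :=
  univ.filter (NBReach A d x)

noncomputable def nearEdges (A : Finset (Finset (Fin n))) (d : ℕ) (x : Fin n) :
    Finset (Finset (Fin n)) :=
  A.filter fun e => ∃ y ∈ e, NBReach A d x y

theorem mem_ball {d : ℕ} {y : Fin n} : y ∈ ball A d x ↔ NBReach A d x y := by
  simp [ball]

theorem mem_nearEdges {d : ℕ} {e : Finset (Fin n)} :
    e ∈ nearEdges A d x ↔ e ∈ A ∧ ∃ y ∈ e, NBReach A d x y :=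
  mem_filter

theorem card_ball_le (d : ℕ) : #(ball A d x) ≤ ∑ ℓ ∈ range (d + 1), #(walks A x ℓ) :=
  calc #(ball A d x) ≤ #((range (d + 1)).biUnion fun ℓ => (walks A x ℓ).image (lastVertex x)) :=
        card_le_card fun y hy => by
          obtain ⟨ℓ, hℓ, l, hl, rfl⟩ := (mem_filter.1 hy).2.exists_mem_walks
          exact mem_biUnion.2 ⟨ℓ, mem_range.2 (by omega), mem_image_of_mem _ hl⟩
    _ ≤ _ := card_biUnion_le.trans (sum_le_sum fun _ _ => card_image_le)

section NearEdges

variable (hmatch : (A : Set (Finset (Fin n))).PairwiseDisjoint id)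
include hmatch

/-- A trailing hyperedge step inside `e` can be dropped. -/
theorem exists_walksEndingWith_true_of_mem {e : Finset (Fin n)} (he : e ∈ A) :
    ∀ {ℓ : ℕ} {l : List (Fin n × Bool)}, l ∈ walks A x ℓ → lastVertex x l ∈ e →
      x ∈ e ∨ ∃ ℓ' ≤ ℓ, ∃ l' ∈ walksEndingWith A x ℓ' true, lastVertex x l' ∈ e
  | 0, l, hl, hle => by
    obtain rfl : l = [] := mem_singleton.1 hl
    exact Or.inl hle
  | ℓ + 1, [], hl, _ => absurd hl nil_notMem_walks_succ
  | ℓ + 1, (y, true) :: rest, hl, hle => Or.inr ⟨ℓ + 1, le_rfl, _, mem_filter.2 ⟨hl, rfl⟩, hle⟩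
  | ℓ + 1, (y, false) :: rest, hl, hle => by
    obtain ⟨hrest, ⟨-, e', he', hze', hye'⟩, -⟩ := cons_mem_walks_succ.1 hl
    obtain rfl := hmatch.elim_finset he' he y hye' hle
    rcases exists_walksEndingWith_true_of_mem he hrest hze' with h | ⟨ℓ', hℓ', h⟩
    · exact Or.inl h
    · exact Or.inr ⟨ℓ', by omega, h⟩

theorem card_filter_mem_le_one (z : Fin n) : #(A.filter (z ∈ ·)) ≤ 1 :=
  card_le_one.2 fun _ he _ hf =>
    hmatch.elim_finset (mem_filter.1 he).1 (mem_filter.1 hf).1 z (mem_filter.1 he).2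
      (mem_filter.1 hf).2

theorem card_nearEdges_le (d : ℕ) :
    #(nearEdges A d x) ≤ #(A.filter (x ∈ ·)) + ∑ ℓ ∈ range (d + 1), #(walksEndingWith A x ℓ true) :=
  calc #(nearEdges A d x)
      ≤ #(A.filter (x ∈ ·) ∪ (range (d + 1)).biUnion fun ℓ =>
          (walksEndingWith A x ℓ true).biUnion fun l => A.filter (lastVertex x l ∈ ·)) :=
        card_le_card fun e he => by
          obtain ⟨he, y, hy, hxy⟩ := mem_filter.1 he
          obtain ⟨ℓ, hℓ, l, hl, rfl⟩ := hxy.exists_mem_walks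
          rcases exists_walksEndingWith_true_of_mem hmatch he hl hy with h | ⟨ℓ', hℓ', l', hl', h⟩
          · exact mem_union_left _ (mem_filter.2 ⟨he, h⟩)
          · exact mem_union_right _ (mem_biUnion.2 ⟨ℓ', mem_range.2 (by omega),
              mem_biUnion.2 ⟨l', hl', mem_filter.2 ⟨he, h⟩⟩⟩)
    _ ≤ #(A.filter (x ∈ ·)) + ∑ ℓ ∈ range (d + 1), #(walksEndingWith A x ℓ true) * 1 := by
        refine (card_union_le _ _).trans (add_le_add_right (card_biUnion_le.trans
          (sum_le_sum fun ℓ _ => card_biUnion_le_card_mul _ _ _ fun l _ => ?_)) _)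
        exact card_filter_mem_le_one hmatch _
    _ = _ := by simp

end NearEdges

section VertexBounds

variable {q : ℕ} (hcard : ∀ e ∈ A, e.card = q)
  (hmatch : (A : Set (Finset (Fin n))).PairwiseDisjoint id)
include hcard hmatch

theorem card_nearEdges_le_pow (hq : 2 ≤ q) (d : ℕ) :
    (q - 1) * #(nearEdges A d x) + 2 ≤ 2 * q ^ d + (q - 1) := by
  have h := card_nearEdges_le hmatch (x := x) d
  have h₁ := card_filter_mem_le_one hmatch x
  have h₂ := sum_card_walksEndingWith_true_le hcard hmatch (x := x) hq d
  calc (q - 1) * #(nearEdges A d x) + 2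
      ≤ (q - 1) * (1 + ∑ ℓ ∈ range (d + 1), #(walksEndingWith A x ℓ true)) + 2 := by gcongr; omega
    _ ≤ 2 * q ^ d + (q - 1) := by rw [mul_add, mul_one]; omega

theorem card_nearEdges_le_of_uncovered (hq : 3 ≤ q) (hx : x ∈ uncovered A) (k : ℕ) :
    #(nearEdges A (k + 1) x) ≤ 2 * q ^ k := by
  have h := card_nearEdges_le hmatch (x := x) (k + 1)
  rw [filter_false_of_mem fun e he => mem_uncovered.1 hx e he, card_empty, zero_add] at h
  exact h.trans (sum_card_walksEndingWith_true_le_of_uncovered hcard hmatch hq hx k)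

theorem card_ball_le_of_uncovered (hq : 3 ≤ q) (hx : x ∈ uncovered A) (k : ℕ) :
    #(ball A (k + 1) x) ≤ (q + 1) * q ^ k :=
  (card_ball_le _).trans (sum_card_walks_le_of_uncovered hcard hmatch hq hx k)

end VertexBounds

end Counting

/-! ### Adding a hyperedge, and the swap -/

section Insert

variable {U : Finset (Fin n)} (hU : U ⊆ uncovered A)
include hU

theorem notMem_of_subset_uncovered (hne : U.Nonempty) : U ∉ A := fun h => by
  obtain ⟨x, hx⟩ := hne
  exact mem_uncovered.1 (hU hx) U h hx

theorem pairwiseDisjoint_insert_of_subset_uncovered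
    (hmatch : (A : Set (Finset (Fin n))).PairwiseDisjoint id) :
    ((insert U A : Finset (Finset (Fin n))) : Set (Finset (Fin n))).PairwiseDisjoint id := by
  rw [coe_insert]
  exact hmatch.insert fun e he _ =>
    disjoint_left.2 fun x hxU hxe => mem_uncovered.1 (hU hxU) e he hxe

end Insert

structure SwapData (A : Finset (Finset (Fin n))) (q : ℕ) where
  u : Fin q → Fin n
  f : Fin q → Finset (Fin n)
  v : Fin q → Fin n
  u_injective : Function.Injective u
  u_mem_uncovered : ∀ i, u i ∈ uncovered A
  f_mem : ∀ i, f i ∈ A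
  f_disjoint : ∀ i j, i ≠ j → Disjoint (f i) (f j)
  v_mem_f : ∀ i, v i ∈ f i

namespace SwapData

variable {q : ℕ} (D : SwapData A q)

theorem u_notMem_f (i j : Fin q) : D.u i ∉ D.f j :=
  mem_uncovered.1 (D.u_mem_uncovered i) _ (D.f_mem j)

theorem u_ne_v (i j : Fin q) : D.u i ≠ D.v j := fun h => D.u_notMem_f i j (h ▸ D.v_mem_f j)

theorem eq_of_mem_f {i j : Fin q} {x : Fin n} (hi : x ∈ D.f i) (hj : x ∈ D.f j) : i = j := by
  by_contra h
  exact disjoint_left.1 (D.f_disjoint i j h) hi hj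

theorem v_injective : Function.Injective D.v := fun i j h =>
  D.eq_of_mem_f (D.v_mem_f i) (h ▸ D.v_mem_f j)

/-- The involution exchanging `u i` and `v i` for every `i`. -/
noncomputable def perm : Equiv.Perm (Fin n) :=
  Equiv.Perm.viaFintypeEmbedding (Equiv.sumComm (Fin q) (Fin q))
    ⟨Sum.elim D.u D.v, D.u_injective.sumElim D.v_injective D.u_ne_v⟩

theorem perm_u (i : Fin q) : D.perm (D.u i) = D.v i :=
  Equiv.Perm.viaFintypeEmbedding_apply_image _ _ (Sum.inl i)

theorem perm_v (i : Fin q) : D.perm (D.v i) = D.u i :=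
  Equiv.Perm.viaFintypeEmbedding_apply_image _ _ (Sum.inr i)

theorem perm_of_ne {x : Fin n} (hu : ∀ i, x ≠ D.u i) (hv : ∀ i, x ≠ D.v i) : D.perm x = x :=
  Equiv.Perm.viaFintypeEmbedding_apply_notMem_range _ _ <| by
    rintro ⟨i | i, rfl⟩
    exacts [hu i rfl, hv i rfl]

theorem eq_v_of_perm_eq_u {x : Fin n} {i : Fin q} (h : D.perm x = D.u i) : x = D.v i :=
  D.perm.injective (h.trans (D.perm_v i).symm)

def U : Finset (Fin n) := univ.image D.u

def F : Finset (Finset (Fin n)) := univ.image D.f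

theorem U_subset_uncovered : D.U ⊆ uncovered A := by
  simpa [U, subset_iff] using D.u_mem_uncovered

theorem card_U : #D.U = q := by
  rw [U, card_image_of_injective _ D.u_injective, card_univ, Fintype.card_fin]

theorem F_subset : D.F ⊆ A := by
  simpa [F, subset_iff] using D.f_mem

/-- Each `f i` trades `v i` for `u i`, and the vertices `v i` form a new hyperedge. -/
noncomputable def family : Finset (Finset (Fin n)) :=
  (insert D.U A).map (mapEmbedding D.perm.toEmbedding).toEmbedding

theorem card_family (hq : 0 < q) : #D.family = #A + 1 := by
  rw [family, card_map, card_insert_of_notMem (notMem_of_subset_uncovered D.U_subset_uncovered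
    (card_pos.1 (D.card_U.symm ▸ hq)))]

theorem card_of_mem_family {e : Finset (Fin n)} (hcard : ∀ e ∈ A, e.card = q)
    (he : e ∈ D.family) : #e = q := by
  obtain ⟨e₀, he₀, rfl⟩ := mem_map.1 he
  simp only [RelEmbedding.coe_toEmbedding, mapEmbedding_apply, card_map]
  rcases mem_insert.1 he₀ with rfl | he₀
  exacts [D.card_U, hcard e₀ he₀]

theorem pairwiseDisjoint_family (hmatch : (A : Set (Finset (Fin n))).PairwiseDisjoint id) :
    (D.family : Set (Finset (Fin n))).PairwiseDisjoint id :=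
  pairwiseDisjoint_map_mapEmbedding
    (pairwiseDisjoint_insert_of_subset_uncovered D.U_subset_uncovered hmatch) _

theorem map_perm_eq_self (hmatch : (A : Set (Finset (Fin n))).PairwiseDisjoint id)
    {e : Finset (Fin n)} (he : e ∈ A) (heF : e ∉ D.F) : e.map D.perm.toEmbedding = e := by
  rw [map_eq_image, Equiv.coe_toEmbedding]
  conv_rhs => rw [← image_id (s := e)]
  refine image_congr fun x hx => D.perm_of_ne (fun i h => ?_) (fun i h => ?_)
  · exact mem_uncovered.1 (D.u_mem_uncovered i) e he (h ▸ hx)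
  · obtain rfl := hmatch.elim_finset he (D.f_mem i) x hx (h ▸ D.v_mem_f i)
    exact heF (mem_image_of_mem _ (mem_univ i))

theorem perm_mem_U_or_f {x : Fin n} (hx : x ∈ D.U ∨ ∃ i, x ∈ D.f i) :
    D.perm x ∈ D.U ∨ ∃ i, D.perm x ∈ D.f i := by
  by_cases hu : ∃ i, x = D.u i
  · obtain ⟨i, rfl⟩ := hu
    exact Or.inr ⟨i, by rw [perm_u]; exact D.v_mem_f i⟩
  by_cases hv : ∃ i, x = D.v i
  · obtain ⟨i, rfl⟩ := hv
    exact Or.inl (by rw [perm_v]; exact mem_image_of_mem _ (mem_univ i))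
  simp only [not_exists] at hu hv
  rwa [D.perm_of_ne hu hv]

theorem mem_map_perm {e : Finset (Fin n)} {z : Fin n} :
    z ∈ (mapEmbedding D.perm.toEmbedding).toEmbedding e ↔ ∃ x ∈ e, D.perm x = z := by
  simp only [RelEmbedding.coe_toEmbedding, mapEmbedding_apply, mem_map, Equiv.coe_toEmbedding]

noncomputable def newEdges : Finset (Finset (Fin n)) :=
  (insert D.U D.F).map (mapEmbedding D.perm.toEmbedding).toEmbedding

theorem mem_U_or_f_of_mem_newEdges {E : Finset (Fin n)} {z : Fin n} (hE : E ∈ D.newEdges)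
    (hz : z ∈ E) : z ∈ D.U ∨ ∃ i, z ∈ D.f i := by
  obtain ⟨e, he, rfl⟩ := mem_map.1 hE
  obtain ⟨x, hx, rfl⟩ := D.mem_map_perm.1 hz
  refine D.perm_mem_U_or_f ?_
  rcases mem_insert.1 he with rfl | he
  · exact Or.inl hx
  · obtain ⟨i, -, rfl⟩ := mem_image.1 he
    exact Or.inr ⟨i, hx⟩

theorem eq_of_mem_newEdges {E : Finset (Fin n)} {x y : Fin n} (hE : E ∈ D.newEdges) (hx : x ∈ E)
    (hy : y ∈ E) (hxU : x ∈ D.U) (hyU : y ∈ D.U) : x = y := by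
  obtain ⟨e, he, rfl⟩ := mem_map.1 hE
  obtain ⟨a, ha, rfl⟩ := D.mem_map_perm.1 hx
  obtain ⟨b, hb, rfl⟩ := D.mem_map_perm.1 hy
  obtain ⟨i, -, hi⟩ := mem_image.1 hxU
  obtain ⟨j, -, hj⟩ := mem_image.1 hyU
  obtain rfl := D.eq_v_of_perm_eq_u hi.symm
  obtain rfl := D.eq_v_of_perm_eq_u hj.symm
  rw [← hi, ← hj]
  rcases mem_insert.1 he with rfl | he
  · obtain ⟨k, -, hk⟩ := mem_image.1 ha
    exact absurd hk (D.u_ne_v k i)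
  · obtain ⟨m, -, rfl⟩ := mem_image.1 he
    rw [D.eq_of_mem_f (D.v_mem_f i) ha, D.eq_of_mem_f (D.v_mem_f j) hb]

theorem family_subset (hmatch : (A : Set (Finset (Fin n))).PairwiseDisjoint id) :
    D.family ⊆ (A \ D.F) ∪ D.newEdges := by
  intro e' he'
  obtain ⟨e, he, rfl⟩ := mem_map.1 he'
  by_cases heN : e ∈ insert D.U D.F
  · exact mem_union_right _ (mem_map_of_mem _ heN)
  · have heA : e ∈ A := (mem_insert.1 he).resolve_left fun h => heN (h ▸ mem_insert_self _ _)
    have heF : e ∉ D.F := fun h => heN (mem_insert_of_mem h)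
    refine mem_union_left _ (mem_sdiff.2 ?_)
    simpa [D.map_perm_eq_self hmatch heA heF] using ⟨heA, heF⟩

theorem hasGirthAtLeast_family (hn : 2 ≤ n)
    (hmatch : (A : Set (Finset (Fin n))).PairwiseDisjoint id) {g : ℕ} (hA : HasGirthAtLeast A g)
    (hfarU : ∀ i j, ∀ y ∈ D.f j, ¬NBReach A (g - 2) (D.u i) y)
    (hfarF : ∀ i j, i ≠ j → ∀ x ∈ D.f i, ∀ y ∈ D.f j, ¬NBReach A (g - 2) x y) :
    HasGirthAtLeast D.family g := by
  refine (hA.sdiff_union (soft := D.U) hn hmatch D.F_subset ?_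
    fun E hE x hx y hy => D.eq_of_mem_newEdges hE hx hy).anti (D.family_subset hmatch)
  rintro x y ⟨E, hE, hxE⟩ ⟨E', hE', hyE⟩ hxy hsoft
  rcases D.mem_U_or_f_of_mem_newEdges hE hxE with hxU | ⟨i, hxi⟩ <;>
    rcases D.mem_U_or_f_of_mem_newEdges hE' hyE with hyU | ⟨j, hyj⟩
  · exact absurd ⟨hxU, hyU⟩ hsoft
  · obtain ⟨i, -, rfl⟩ := mem_image.1 hxU
    exact Or.inl (hfarU i j y hyj)
  · obtain ⟨j, -, rfl⟩ := mem_image.1 hyU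
    exact Or.inl fun h => hfarU j i x hxi h.symm
  · by_cases hij : i = j
    · subst hij
      exact Or.inr ⟨D.f i, mem_image_of_mem _ (mem_univ i), hxi, hyj⟩
    · exact Or.inl (hfarF i j hij x hxi y hyj)

end SwapData

theorem exists_augmentation_of_far_uncovered (hn : 2 ≤ n) {q g : ℕ} (hq : 0 < q)
    (hcard : ∀ e ∈ A, e.card = q) (hmatch : (A : Set (Finset (Fin n))).PairwiseDisjoint id)
    (hA : HasGirthAtLeast A g) {U : Finset (Fin n)} (hU : U ⊆ uncovered A) (hUq : #U = q)
    (hfar : (U : Set (Fin n)).Pairwise fun x y => ¬NBReach A (g - 2) x y) :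
    ∃ A' : Finset (Finset (Fin n)), #A' = #A + 1 ∧ (∀ e ∈ A', #e = q) ∧
      (A' : Set (Finset (Fin n))).PairwiseDisjoint id ∧ HasGirthAtLeast A' g := by
  refine ⟨insert U A, card_insert_of_notMem (notMem_of_subset_uncovered hU (card_pos.1 (hUq ▸ hq))),
    forall_mem_insert _ _ _ |>.2 ⟨hUq, hcard⟩,
    pairwiseDisjoint_insert_of_subset_uncovered hU hmatch,
    ?_⟩
  refine (hA.sdiff_union (F := ∅) (New := {U}) (soft := ∅) hn hmatch (empty_subset A) ?_
    (by simp)).anti (by rw [sdiff_empty, union_comm, ← insert_eq])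
  rintro x y ⟨E, hE, hx⟩ ⟨E', hE', hy⟩ hxy -
  rw [mem_singleton] at hE hE'
  subst hE hE'
  exact Or.inl (hfar hx hy hxy)

theorem exists_augmentation_of_far_edges (hn : 2 ≤ n) {q g : ℕ} (hq : 0 < q)
    (hcard : ∀ e ∈ A, e.card = q) (hmatch : (A : Set (Finset (Fin n))).PairwiseDisjoint id)
    (hA : HasGirthAtLeast A g) {U : Finset (Fin n)} (hU : U ⊆ uncovered A) (hUq : #U = q)
    {T : Finset (Finset (Fin n))} (hT : T ⊆ A) (hTq : #T = q)
    (hfarT : (T : Set (Finset (Fin n))).Pairwise fun e f =>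
      ¬∃ x ∈ e, ∃ y ∈ f, NBReach A (g - 2) x y)
    (hfarU : ∀ u ∈ U, ∀ f ∈ T, ∀ y ∈ f, ¬NBReach A (g - 2) u y) :
    ∃ A' : Finset (Finset (Fin n)), #A' = #A + 1 ∧ (∀ e ∈ A', #e = q) ∧
      (A' : Set (Finset (Fin n))).PairwiseDisjoint id ∧ HasGirthAtLeast A' g := by
  let eU := U.equivFinOfCardEq hUq
  let eT := T.equivFinOfCardEq hTq
  have hf_ne : ∀ i, (eT.symm i : Finset (Fin n)).Nonempty := fun i =>
    card_pos.1 (by rw [hcard _ (hT (eT.symm i).2)]; exact hq)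
  choose v hv using hf_ne
  have hf_inj : Function.Injective fun i => (eT.symm i : Finset (Fin n)) :=
    Subtype.val_injective.comp eT.symm.injective
  let D : SwapData A q :=
    { u := fun i => eU.symm i
      f := fun i => eT.symm i
      v := v
      u_injective := Subtype.val_injective.comp eU.symm.injective
      u_mem_uncovered := fun i => hU (eU.symm i).2
      f_mem := fun i => hT (eT.symm i).2
      f_disjoint := fun i j hij => hmatch (hT (eT.symm i).2) (hT (eT.symm j).2)
        (hf_inj.ne hij)
      v_mem_f := hv }
  refine ⟨D.family, D.card_family hq, fun e he => D.card_of_mem_family hcard he,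
    D.pairwiseDisjoint_family hmatch, D.hasGirthAtLeast_family hn hmatch hA
      (fun i j y hy => hfarU _ (eU.symm i).2 _ (eT.symm j).2 y hy)
      (fun i j hij x hx y hy h =>
        hfarT (eT.symm i).2 (eT.symm j).2 (hf_inj.ne hij) ⟨x, hx, y, hy, h⟩)⟩

/-! ### Finding far hyperedges -/

theorem mul_card_add_card_uncovered {q : ℕ} (hcard : ∀ e ∈ A, e.card = q)
    (hmatch : (A : Set (Finset (Fin n))).PairwiseDisjoint id) :
    q * #A + #(uncovered A) = n := by
  have hcovered : #(A.biUnion id) = q * #A := by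
    rw [card_biUnion hmatch]
    simp only [id]
    rw [sum_const_nat hcard, mul_comm]
  have hunc : uncovered A = (A.biUnion id)ᶜ := by
    ext x
    simp [uncovered]
  have := card_le_univ (A.biUnion id)
  rw [hunc, card_compl, Fintype.card_fin, hcovered] at *
  omega

section FarEdges

variable {q : ℕ} (hq : 3 ≤ q) (hcard : ∀ e ∈ A, e.card = q)
  (hmatch : (A : Set (Finset (Fin n))).PairwiseDisjoint id)
include hq hcard hmatch

theorem card_biUnion_nearEdges_le {e : Finset (Fin n)} (he : e ∈ A) (d : ℕ) :
    (q - 1) * #(e.biUnion (nearEdges A d)) + 2 * q ≤ q * (2 * q ^ d + (q - 1)) :=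
  calc (q - 1) * #(e.biUnion (nearEdges A d)) + 2 * q
      ≤ (q - 1) * ∑ x ∈ e, #(nearEdges A d x) + ∑ _x ∈ e, 2 := by
        rw [sum_const, smul_eq_mul, hcard e he, mul_comm q]; gcongr; exact card_biUnion_le
    _ = ∑ x ∈ e, ((q - 1) * #(nearEdges A d x) + 2) := by rw [mul_sum, sum_add_distrib]
    _ ≤ ∑ _x ∈ e, (2 * q ^ d + (q - 1)) :=
        sum_le_sum fun x _ => card_nearEdges_le_pow hcard hmatch (by omega) d
    _ = q * (2 * q ^ d + (q - 1)) := by rw [sum_const, smul_eq_mul, hcard e he]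

theorem card_le_of_subset_biUnion_nearEdges {T : Finset (Finset (Fin n))} (hT : T ⊆ A)
    (hTq : #T < q) {B : Finset (Finset (Fin n))} (d : ℕ)
    (hB : B ⊆ T.biUnion fun e => e.biUnion (nearEdges A d)) :
    #B + 2 * q ≤ q * (2 * q ^ d + (q - 1)) := by
  set C := q * (2 * q ^ d + (q - 1))
  have hsum : (q - 1) * #B + #T * (2 * q) ≤ #T * C :=
    calc (q - 1) * #B + #T * (2 * q)
        ≤ (q - 1) * ∑ e ∈ T, #(e.biUnion (nearEdges A d)) + ∑ _e ∈ T, 2 * q := by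
          rw [sum_const, smul_eq_mul]; gcongr; exact (card_le_card hB).trans card_biUnion_le
      _ = ∑ e ∈ T, ((q - 1) * #(e.biUnion (nearEdges A d)) + 2 * q) := by
          rw [mul_sum, sum_add_distrib]
      _ ≤ ∑ _e ∈ T, C := sum_le_sum fun e he => card_biUnion_nearEdges_le hq hcard hmatch (hT he) d
      _ = #T * C := by rw [sum_const, smul_eq_mul]
  have hC : (q - 1 - #T) * (2 * q) ≤ (q - 1 - #T) * C :=
    Nat.mul_le_mul_left _ (by simp only [C]; nlinarith [Nat.one_le_pow d q (by omega)])
  refine Nat.le_of_mul_le_mul_left (c := q - 1) ?_ (by omega)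
  obtain ⟨s, hs⟩ : ∃ s, q - 1 = #T + s := ⟨q - 1 - #T, by omega⟩
  rw [hs, Nat.add_sub_cancel_left] at hC
  rw [hs] at hsum ⊢
  nlinarith

end FarEdges

theorem mul_add_lt_pow {q k a : ℕ} (hq : 3 ≤ q)
    (ha : a + 2 * q ≤ q * (2 * q ^ (k + 1) + (q - 1))) :
    q * (a + q * (2 * q ^ k)) + (q - 1) * ((q + 1) * q ^ k) < q ^ (k + 4) := by
  obtain ⟨r, rfl⟩ : ∃ r, q = r + 3 := ⟨q - 3, by omega⟩
  simp only [pow_add, pow_one] at ha ⊢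
  have hp : 1 ≤ (r + 3) ^ k := Nat.one_le_pow _ _ (by omega)
  generalize (r + 3) ^ k = p at *
  simp only [show r + 3 - 1 = r + 2 by omega] at *
  have ha' := Nat.mul_le_mul_left (r + 3) ha
  have hp' := Nat.mul_le_mul_left ((r + 3) ^ 2 * r * (r + 4)) hp
  ring_nf at ha' hp' ⊢
  linarith [Nat.zero_le (r ^ 2), Nat.zero_le (r ^ 3), Nat.zero_le (r ^ 4)]

theorem card_uncovered_le_of_cover {q k : ℕ} (hq : 3 ≤ q) (hcard : ∀ e ∈ A, e.card = q)
    (hmatch : (A : Set (Finset (Fin n))).PairwiseDisjoint id) {S : Finset (Fin n)}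
    (hSU : S ⊆ uncovered A) (hcover : ∀ u ∈ uncovered A, ∃ s ∈ S, NBReach A (k + 1) s u) :
    #(uncovered A) ≤ #S * ((q + 1) * q ^ k) :=
  calc #(uncovered A) ≤ #(S.biUnion (ball A (k + 1))) := card_le_card fun u hu => by
        obtain ⟨s, hs, h⟩ := hcover u hu
        exact mem_biUnion.2 ⟨s, hs, mem_ball.2 h⟩
    _ ≤ #S * ((q + 1) * q ^ k) := card_biUnion_le_card_mul _ _ _ fun s hs =>
        card_ball_le_of_uncovered hcard hmatch hq (hSU hs) k

/-- Greedy choice: the hyperedges near `U` or near the hyperedges already chosen are too few to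
exhaust `A`. -/
theorem exists_far_edges {q k : ℕ} (hq : 3 ≤ q) (hcard : ∀ e ∈ A, e.card = q)
    (hmatch : (A : Set (Finset (Fin n))).PairwiseDisjoint id)
    (hA : q ^ (k + 4) ≤ q * #A + (q - 1) * ((q + 1) * q ^ k)) {U : Finset (Fin n)}
    (hU : U ⊆ uncovered A) (hUq : #U = q) :
    ∃ T ⊆ A, #T = q ∧
      (T : Set (Finset (Fin n))).Pairwise (fun e f => ¬∃ x ∈ e, ∃ y ∈ f, NBReach A (k + 1) x y) ∧
      ∀ u ∈ U, ∀ f ∈ T, ∀ y ∈ f, ¬NBReach A (k + 1) u y := by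
  let A₀ := A.filter fun e => ∀ u ∈ U, e ∉ nearEdges A (k + 1) u
  have hA₀ : #A ≤ #A₀ + q * (2 * q ^ k) :=
    calc #A ≤ #(A₀ ∪ U.biUnion (nearEdges A (k + 1))) := card_le_card fun e he => by
          by_cases h : ∀ u ∈ U, e ∉ nearEdges A (k + 1) u
          · exact mem_union_left _ (mem_filter.2 ⟨he, h⟩)
          · simp only [not_forall, not_not] at h
            obtain ⟨u, hu, h⟩ := h
            exact mem_union_right _ (mem_biUnion.2 ⟨u, hu, h⟩)
      _ ≤ #A₀ + #U * (2 * q ^ k) := (card_union_le _ _).trans <| add_le_add_right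
          (card_biUnion_le_card_mul _ _ _ fun u hu =>
            card_nearEdges_le_of_uncovered hcard hmatch hq (hU hu) k) _
      _ = _ := by rw [hUq]
  have hext : ∀ T ⊆ A₀, #T < q →
      ∃ a ∈ A₀, ∀ b ∈ T, ¬∃ x ∈ b, ∃ y ∈ a, NBReach A (k + 1) x y := by
    intro T hT hTq
    by_contra! hblocked
    have hB := card_le_of_subset_biUnion_nearEdges hq hcard hmatch (hT.trans (filter_subset _ _))
      hTq (B := A₀) (k + 1) fun a ha => by
        obtain ⟨b, hb, x, hx, y, hy, h⟩ := hblocked a ha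
        exact mem_biUnion.2 ⟨b, hb, mem_biUnion.2 ⟨x, hx,
          mem_nearEdges.2 ⟨(mem_filter.1 ha).1, y, hy, h⟩⟩⟩
    have := mul_add_lt_pow hq hB
    have := Nat.mul_le_mul_left q hA₀
    omega
  obtain ⟨T, hTA₀, hTq, hTfar⟩ := exists_pairwise_not_rel_card_eq A₀
    (fun e f => ∃ x ∈ e, ∃ y ∈ f, NBReach A (k + 1) x y)
    (fun e he => by
      obtain ⟨x, hx⟩ := card_pos.1 (by rw [hcard e (mem_filter.1 he).1]; omega)
      exact ⟨x, hx, x, hx, NBReach.refl _ _⟩)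
    (fun e f ⟨x, hx, y, hy, h⟩ => ⟨y, hy, x, hx, h.symm⟩) q hext
  refine ⟨T, hTA₀.trans (filter_subset _ _), hTq, hTfar, fun u hu f hf y hy h => ?_⟩
  exact (mem_filter.1 (hTA₀ hf)).2 u hu (mem_nearEdges.2 ⟨(mem_filter.1 (hTA₀ hf)).1, y, hy, h⟩)

theorem exists_far_uncovered_far_edges {q k : ℕ} (hq : 3 ≤ q) (hcard : ∀ e ∈ A, e.card = q)
    (hmatch : (A : Set (Finset (Fin n))).PairwiseDisjoint id) (hn : n = q ^ (k + 4))
    (hA : #A < q ^ (k + 3)) {S : Finset (Fin n)} (hSU : S ⊆ uncovered A) (hS : #S < q)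
    (hcover : ∀ u ∈ uncovered A, ∃ s ∈ S, NBReach A (k + 1) s u) :
    ∃ U ⊆ uncovered A, #U = q ∧ ∃ T ⊆ A, #T = q ∧
      (T : Set (Finset (Fin n))).Pairwise (fun e f => ¬∃ x ∈ e, ∃ y ∈ f, NBReach A (k + 1) x y) ∧
      ∀ u ∈ U, ∀ f ∈ T, ∀ y ∈ f, ¬NBReach A (k + 1) u y := by
  have htotal := mul_card_add_card_uncovered hcard hmatch
  have hunc : #(uncovered A) ≤ (q - 1) * ((q + 1) * q ^ k) :=
    (card_uncovered_le_of_cover hq hcard hmatch hSU hcover).trans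
      (Nat.mul_le_mul_right _ (by omega))
  have hAq : q * #A + q ≤ q ^ (k + 4) := by
    rw [pow_succ', ← mul_add_one]
    exact Nat.mul_le_mul_left q hA
  obtain ⟨U, hU, hUq⟩ := exists_subset_card_eq (s := uncovered A) (n := q) (by omega)
  exact ⟨U, hU, hUq, exists_far_edges hq hcard hmatch (by omega) hU hUq⟩

end HypergraphGirth

open HypergraphGirth in
/-- Augmentation step (key lemma of Theorem 2): if A is a set of q-hyperedges on
the cycle H on n = q^{g+1} vertices (q ≥ 3, g ≥ 3) such that no vertex lies in
more than one hyperedge and (V, E₀ ∪ A) has girth at least g, and |A| < q^g,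
then there is a set A⁺ of q-hyperedges with |A⁺| = |A| + 1 satisfying the same
two conditions. -/
theorem stmt13 (q g : ℕ) (hq : 3 ≤ q) (hg : 3 ≤ g)
    (A : Finset (Finset (Fin (q ^ (g + 1)))))
    (hcard : ∀ e ∈ A, e.card = q)
    (hmatch : ∀ e ∈ A, ∀ f ∈ A, e ≠ f → Disjoint e f)
    (hgirth : ∀ (L : ℕ) (w : ZMod L → Fin (q ^ (g + 1))) (t : ZMod L → Bool),
      IsCycleWalk A L w t → g ≤ L)
    (hA : A.card < q ^ g) :
    ∃ A' : Finset (Finset (Fin (q ^ (g + 1)))),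
      A'.card = A.card + 1
      ∧ (∀ e ∈ A', e.card = q)
      ∧ (∀ e ∈ A', ∀ f ∈ A', e ≠ f → Disjoint e f)
      ∧ (∀ (L : ℕ) (w : ZMod L → Fin (q ^ (g + 1))) (t : ZMod L → Bool),
          IsCycleWalk A' L w t → g ≤ L) := by
  obtain ⟨k, rfl⟩ : ∃ k, g = k + 3 := ⟨g - 3, by omega⟩
  have hn : 2 ≤ q ^ (k + 3 + 1) := (show 2 ≤ q by omega).trans (Nat.le_self_pow (by omega) q)
  have hmatch' : (A : Set (Finset (Fin (q ^ (k + 3 + 1))))).PairwiseDisjoint id :=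
    fun e he f hf => hmatch e he f hf
  obtain ⟨S, hSU, hSfar, hcover⟩ := exists_pairwise_not_rel_cover (uncovered A) (NBReach A (k + 1))
    (NBReach.refl _) fun _ _ => NBReach.symm
  by_cases hS : q ≤ S.card
  · obtain ⟨U, hUS, hUq⟩ := Finset.exists_subset_card_eq hS
    exact exists_augmentation_of_far_uncovered hn (by omega) hcard hmatch' hgirth (hUS.trans hSU)
      hUq (hSfar.mono hUS)
  obtain ⟨U, hU, hUq, T, hT, hTq, hfarT, hfarU⟩ := exists_far_uncovered_far_edges hq hcard
    hmatch' rfl hA hSU (by omega) hcover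
  exact exists_augmentation_of_far_edges hn (by omega) hcard hmatch' hgirth hU hUq hT hTq
    hfarT hfarU
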